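/- Let G be a second-order differential operator on functions of (c,x,y) ∈ ℝ^{2+d}, and suppose G maps Pol_n (polynomials of degree ≤ n) into Pol_n for all n. Augment G with a jump part: (G_J f)(c,x,y) = (G f)(c,x,y) + λ ∫_S [ f(c, x + (x − 1ᵀy/a)z, y) − f(c,x,y) − (x − 1ᵀy/a)·z·f_x(c,x,y) ] F(dz), where λ ≥ 0, a > 0, and F is a probability measure on S ⊆ (−1,∞) with finite moments of all orders. Then G_J also maps Pol_n into Pol_n for every n. -/

import Mathlib

open MeasureTheory MvPolynomial

noncomputable section

/-- The set of functions on `ℝ^(d+2)` (coordinates `c` = index 0, `x` = index 1,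
`y_k` = index `k+2`) given by polynomials of total degree at most `n`. -/
def PolFun (d n : ℕ) : Set ((Fin (d + 2) → ℝ) → ℝ) :=
  {f | ∃ p : MvPolynomial (Fin (d + 2)) ℝ, p.totalDegree ≤ n ∧
    f = fun v => MvPolynomial.eval v p}

/-- The jump part added to a generator: compensated compound-Poisson jumps of the
stock price with amplitude `(x, y) ↦ x + (x − 1ᵀy/a)·z`, `z ∼ F`. Here `f_x` is
the partial derivative in the `x`-coordinate (index 1). -/
def jumpPart (d : ℕ) (a lam : ℝ) (F : Measure ℝ)
    (f : (Fin (d + 2) → ℝ) → ℝ) : (Fin (d + 2) → ℝ) → ℝ :=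
  fun v => lam * ∫ z,
    (f (Function.update v 1 (v 1 + (v 1 - (∑ k : Fin d, v k.succ.succ) / a) * z))
      - f v
      - (v 1 - (∑ k : Fin d, v k.succ.succ) / a) * z * fderiv ℝ f v (Pi.single 1 1)) ∂F

/-!
Substituting `x ↦ x + (x − 1ᵀy/a)·z` into a polynomial `p` of degree `≤ n` yields a polynomial
in `z` whose coefficients are polynomials in `(c, x, y)` of degree `≤ n`, because every variable
is replaced by an expression of degree `≤ 1` in `(c, x, y)`. Its constant coefficient is `p`
and its linear coefficient is `(x − 1ᵀy/a)·∂ₓp`, so the compensated integrand is this polynomial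
with its first two terms removed, and integrating against `F` replaces each `zᵏ` by the `k`-th
moment of `F`.
-/

namespace MvPolynomial

variable {σ R : Type*} [CommSemiring R]

theorem aeval_mem_of_totalDegree_le {S : Type*} [CommSemiring S] [Algebra R S]
    (A : ℕ → Submodule R S) [SetLike.GradedMonoid A] (hA : Monotone A) {g : σ → S}
    (hg : ∀ j, g j ∈ A 1) {p : MvPolynomial σ R} {n : ℕ} (hp : p.totalDegree ≤ n) :
    aeval g p ∈ A n := by
  rw [p.as_sum, map_sum]
  refine Submodule.sum_mem _ fun m hm => ?_
  rw [aeval_monomial, Algebra.algebraMap_eq_smul_one, smul_mul_assoc, one_mul]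
  refine Submodule.smul_mem _ _ (hA ((le_totalDegree hm).trans hp) ?_)
  simpa [Finsupp.prod, Finsupp.sum] using
    SetLike.prod_pow_mem_graded A (fun _ => 1) g m fun j _ => hg j

variable (σ R) in
def coeffwiseTotalDegreeLE (n : ℕ) : Submodule R (Polynomial (MvPolynomial σ R)) where
  carrier := {P | ∀ k, (P.coeff k).totalDegree ≤ n}
  add_mem' {P Q} hP hQ k := by
    simpa using (totalDegree_add _ _).trans (max_le (hP k) (hQ k))
  zero_mem' k := by simp
  smul_mem' c P hP k := by
    simpa using (totalDegree_smul_le _ _).trans (hP k)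

theorem coeffwiseTotalDegreeLE_mono : Monotone (coeffwiseTotalDegreeLE σ R) :=
  fun _ _ hmn _ hP k => (hP k).trans hmn

instance : SetLike.GradedMonoid (coeffwiseTotalDegreeLE σ R) where
  one_mem k := by
    rcases eq_or_ne k 0 with rfl | hk <;> simp [Polynomial.coeff_one, *]
  mul_mem {s t P Q} hP hQ k := by
    rw [Polynomial.coeff_mul]
    exact (totalDegree_finsetSum _ _).trans <| Finset.sup_le fun x _ =>
      (totalDegree_mul _ _).trans (add_le_add (hP _) (hQ _))

/-- `p(X + T • u)`, as a polynomial in `T` with coefficients in `MvPolynomial σ R`. -/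
def shiftAlong (u : σ → MvPolynomial σ R) :
    MvPolynomial σ R →ₐ[R] Polynomial (MvPolynomial σ R) :=
  aeval fun j => Polynomial.C (X j) + Polynomial.C (u j) * Polynomial.X

theorem eval_map_shiftAlong (u : σ → MvPolynomial σ R) (p : MvPolynomial σ R) (v : σ → R)
    (z : R) :
    ((shiftAlong u p).map (eval v)).eval z = eval (v + z • fun j => eval v (u j)) p := by
  induction p using MvPolynomial.induction_on with
  | C c => simp [shiftAlong]
  | add p q hp hq => simp [hp, hq]
  | mul_X p j hp =>
    simp only [shiftAlong] at hp
    simp [shiftAlong, hp, mul_comm z]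

theorem totalDegree_coeff_shiftAlong_le {u : σ → MvPolynomial σ R}
    (hu : ∀ j, (u j).totalDegree ≤ 1) (p : MvPolynomial σ R) (k : ℕ) :
    ((shiftAlong u p).coeff k).totalDegree ≤ p.totalDegree := by
  refine (aeval_mem_of_totalDegree_le (coeffwiseTotalDegreeLE σ R) coeffwiseTotalDegreeLE_mono
    (fun j i => ?_) le_rfl : shiftAlong u p ∈ coeffwiseTotalDegreeLE σ R _) k
  rw [Polynomial.coeff_add, Polynomial.coeff_C, Polynomial.coeff_C_mul_X]
  refine (totalDegree_add _ _).trans (max_le ?_ ?_)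
  · split_ifs
    · exact (totalDegree_monomial_le _ _).trans (by simp)
    · simp
  · split_ifs <;> simp [hu]

theorem fderiv_eval_eq_coeff_one_map_shiftAlong [Fintype σ] (u : σ → MvPolynomial σ ℝ)
    (p : MvPolynomial σ ℝ) (v : σ → ℝ) :
    fderiv ℝ (fun w => eval w p) v (fun j => eval v (u j)) =
      ((shiftAlong u p).map (eval v)).coeff 1 := by
  set e : σ → ℝ := fun j => eval v (u j)
  have hline : HasDerivAt (fun z : ℝ => v + z • e) e 0 := by
    simpa using ((hasDerivAt_id (0 : ℝ)).smul_const e).const_add v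
  have hf : HasFDerivAt (fun w => eval w p) (fderiv ℝ (fun w => eval w p) v) v :=
    (AnalyticOnNhd.eval_mvPolynomial p v trivial).differentiableAt.hasFDerivAt
  have hcomp : HasDerivAt (fun z => ((shiftAlong u p).map (eval v)).eval z)
      (fderiv ℝ (fun w => eval w p) v e) 0 := by
    simpa only [Function.comp_def, eval_map_shiftAlong] using
      hf.comp_hasDerivAt_of_eq (0 : ℝ) hline (by simp only [zero_smul, add_zero])
  rw [hcomp.unique (Polynomial.hasDerivAt _ 0), ← Polynomial.coeff_zero_eq_eval_zero,
    Polynomial.coeff_derivative]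
  simp

end MvPolynomial

theorem Polynomial.eval_sub_coeff_zero_sub_coeff_one_mul {R : Type*} [CommRing R]
    (P : Polynomial R) {N : ℕ} (hN : P.natDegree < N) (h2 : 2 ≤ N) (z : R) :
    P.eval z - P.coeff 0 - P.coeff 1 * z = ∑ k ∈ Finset.Ico 2 N, P.coeff k * z ^ k := by
  rw [P.eval_eq_sum_range' hN, ← Finset.sum_range_add_sum_Ico _ h2]
  simp only [Finset.sum_range_succ, Finset.range_one, Finset.sum_singleton, pow_zero, mul_one,
    pow_one]
  ring

theorem integral_eval_sub_coeff_zero_sub_coeff_one_mul {F : Measure ℝ}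
    (hmom : ∀ m : ℕ, Integrable (fun z => z ^ m) F) (P : Polynomial ℝ) {N : ℕ}
    (hN : P.natDegree < N) (h2 : 2 ≤ N) :
    ∫ z, (P.eval z - P.coeff 0 - P.coeff 1 * z) ∂F =
      ∑ k ∈ Finset.Ico 2 N, P.coeff k * ∫ z, z ^ k ∂F := by
  simp_rw [P.eval_sub_coeff_zero_sub_coeff_one_mul hN h2]
  rw [integral_finsetSum _ fun k _ => (hmom k).const_mul _]
  simp_rw [integral_const_mul]

def jumpAmplitude (d : ℕ) (a : ℝ) : MvPolynomial (Fin (d + 2)) ℝ :=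
  X 1 - C a⁻¹ * ∑ k : Fin d, X k.succ.succ

def jumpDirection (d : ℕ) (a : ℝ) : Fin (d + 2) → MvPolynomial (Fin (d + 2)) ℝ :=
  Pi.single 1 (jumpAmplitude d a)

theorem eval_jumpAmplitude (d : ℕ) (a : ℝ) (v : Fin (d + 2) → ℝ) :
    eval v (jumpAmplitude d a) = v 1 - (∑ k : Fin d, v k.succ.succ) / a := by
  simp [jumpAmplitude, div_eq_inv_mul]

theorem totalDegree_jumpDirection_le (d : ℕ) (a : ℝ) (j : Fin (d + 2)) :
    (jumpDirection d a j).totalDegree ≤ 1 := by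
  rcases eq_or_ne j 1 with rfl | hj
  · rw [jumpDirection, Pi.single_eq_same, jumpAmplitude, sub_eq_add_neg]
    refine (totalDegree_add _ _).trans (max_le ((totalDegree_X _).le) ?_)
    rw [totalDegree_neg]
    refine (totalDegree_mul _ _).trans ?_
    rw [totalDegree_C, zero_add]
    exact (totalDegree_finsetSum _ _).trans (Finset.sup_le fun k _ => (totalDegree_X _).le)
  · simp [jumpDirection, hj]

theorem jumpPart_eval_eq_sum (d : ℕ) (a lam : ℝ) {F : Measure ℝ}
    (hmom : ∀ m : ℕ, Integrable (fun z => z ^ m) F) (p : MvPolynomial (Fin (d + 2)) ℝ)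
    (v : Fin (d + 2) → ℝ) :
    let A := shiftAlong (jumpDirection d a) p
    jumpPart d a lam F (fun w => eval w p) v =
      lam * ∑ k ∈ Finset.Ico 2 (A.natDegree + 2), eval v (A.coeff k) * ∫ z, z ^ k ∂F := by
  intro A
  set P := A.map (eval v)
  set c := v 1 - (∑ k : Fin d, v k.succ.succ) / a
  have hdir : (fun j => eval v (jumpDirection d a j)) = Pi.single 1 c := by
    ext j
    rcases eq_or_ne j 1 with rfl | hj <;> simp [jumpDirection, c, eval_jumpAmplitude, *]
  have hshift (z : ℝ) : eval (Function.update v 1 (v 1 + c * z)) p = P.eval z := by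
    have hpoint : Function.update v 1 (v 1 + c * z) = v + z • Pi.single 1 c := by
      ext j
      rcases eq_or_ne j 1 with rfl | hj <;> simp [mul_comm, *]
    rw [eval_map_shiftAlong, hdir, hpoint]
  have hcoeff0 : eval v p = P.coeff 0 := by
    rw [Polynomial.coeff_zero_eq_eval_zero, eval_map_shiftAlong, zero_smul, add_zero]
  have hcoeff1 : c * fderiv ℝ (fun w => eval w p) v (Pi.single 1 1) = P.coeff 1 := by
    rw [← fderiv_eval_eq_coeff_one_map_shiftAlong, hdir, ← smul_eq_mul, ← map_smul,
      ← Pi.single_smul', smul_eq_mul, mul_one]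
  have hdeg : P.natDegree < A.natDegree + 2 := Polynomial.natDegree_map_le.trans_lt (by omega)
  rw [jumpPart]
  congr 1
  calc _ = ∫ z, (P.eval z - P.coeff 0 - P.coeff 1 * z) ∂F := by
        congr 1
        ext z
        rw [hshift, hcoeff0, ← hcoeff1]
        ring
    _ = _ := integral_eval_sub_coeff_zero_sub_coeff_one_mul hmom P hdeg (by omega)
    _ = _ := by simp [P, Polynomial.coeff_map]

theorem jump_generator_polynomial_preserving_general (d : ℕ) (a lam : ℝ)
    (G : ((Fin (d + 2) → ℝ) → ℝ) → ((Fin (d + 2) → ℝ) → ℝ))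
    (hG : ∀ (n : ℕ) (f : (Fin (d + 2) → ℝ) → ℝ), f ∈ PolFun d n → G f ∈ PolFun d n)
    (F : Measure ℝ)
    (hmom : ∀ m : ℕ, Integrable (fun z => z ^ m) F) :
    ∀ (n : ℕ) (f : (Fin (d + 2) → ℝ) → ℝ), f ∈ PolFun d n →
      (fun v => G f v + jumpPart d a lam F f v) ∈ PolFun d n := by
  rintro n _ ⟨p, hp, rfl⟩
  obtain ⟨q, hq, hGq⟩ := hG n _ ⟨p, hp, rfl⟩
  set A := shiftAlong (jumpDirection d a) p
  have hA (k : ℕ) : A.coeff k ∈ restrictTotalDegree _ ℝ n := (mem_restrictTotalDegree _ _ _).2 <|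
    (totalDegree_coeff_shiftAlong_le (totalDegree_jumpDirection_le d a) p k).trans hp
  refine ⟨q + lam • ∑ k ∈ Finset.Ico 2 (A.natDegree + 2), (∫ z, z ^ k ∂F) • A.coeff k, ?_, ?_⟩
  · rw [← mem_restrictTotalDegree]
    exact add_mem ((mem_restrictTotalDegree _ _ _).2 hq) <|
      Submodule.smul_mem _ _ <| Submodule.sum_mem _ fun k _ => Submodule.smul_mem _ _ (hA k)
  · ext v
    simp [hGq, jumpPart_eval_eq_sum d a lam hmom p v, A, smul_eval, Finset.mul_sum, mul_comm]

/-- If a second-order operator `G` maps `Pol_n` into `Pol_n` for all `n`, then so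
does the operator `G_J = G + jump part`, provided the jump measure `F` is a
probability measure supported in `(−1, ∞)` with finite moments of all orders. -/
theorem jump_generator_polynomial_preserving (d : ℕ) (hd : 1 ≤ d) (a lam : ℝ)
    (ha : 0 < a) (hlam : 0 ≤ lam)
    (G : ((Fin (d + 2) → ℝ) → ℝ) → ((Fin (d + 2) → ℝ) → ℝ))
    (hG : ∀ (n : ℕ) (f : (Fin (d + 2) → ℝ) → ℝ), f ∈ PolFun d n → G f ∈ PolFun d n)
    (F : Measure ℝ) [IsProbabilityMeasure F]
    (hsupp : ∀ᵐ z ∂F, -1 < z)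
    (hmom : ∀ m : ℕ, Integrable (fun z => z ^ m) F) :
    ∀ (n : ℕ) (f : (Fin (d + 2) → ℝ) → ℝ), f ∈ PolFun d n →
      (fun v => G f v + jumpPart d a lam F f v) ∈ PolFun d n :=
  jump_generator_polynomial_preserving_general d a lam G hG F hmom
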